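/- Along every C¹ solution s ↦ (r_*(s),θ(s),ξ(s),q(s)) of Hamilton's equations for P* with θ(s) ∈ (0,π) and (ξ,q) ≠ (0,0), the energy E := P* is constant and the Carter-type quantity 𝒦 := q(s)² + a²E²·sin²θ(s) is constant; equivalently, (d/ds)q² = (d/ds)(a²E²cos²θ) along the flow. -/

import Mathlib

/-!
STATEMENT 13 (conservation of energy and of the Carter-type quantity along the
flow of the simple-null-geodesic Hamiltonian `P* = h²√(ξ² + a₀²q²)`).

Along every C¹ solution `s ↦ (r_*(s),θ(s),ξ(s),q(s))` of Hamilton's equations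
for `P*` with `θ(s) ∈ (0,π)` and `(ξ,q) ≠ (0,0)`, the energy `E := P*` is
constant and the Carter-type quantity `𝒦 := q(s)² + a²E²sin²θ(s)` is constant.
-/

noncomputable section
open Real Set

namespace Stmt13

/-- `Δ(r) = r² − 2Mr + a² + Q²`. -/
def Δ (M a Q r : ℝ) : ℝ := r ^ 2 - 2 * M * r + a ^ 2 + Q ^ 2

/-- Outer horizon `r₊`. -/
def rplus (M a Q : ℝ) : ℝ := M + Real.sqrt (M ^ 2 - (a ^ 2 + Q ^ 2))

/-- Inner horizon `r₋`. -/
def rminus (M a Q : ℝ) : ℝ := M - Real.sqrt (M ^ 2 - (a ^ 2 + Q ^ 2))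

/-- Surface gravity of the outer horizon. -/
def κplus (M a Q : ℝ) : ℝ :=
  (rplus M a Q - rminus M a Q) / (2 * ((rplus M a Q) ^ 2 + a ^ 2))

/-- Surface gravity of the inner horizon. -/
def κminus (M a Q : ℝ) : ℝ :=
  (rplus M a Q - rminus M a Q) / (2 * ((rminus M a Q) ^ 2 + a ^ 2))

/-- `σ²(r,θ) = (r²+a²)² − a²Δ(r)sin²θ`. -/
def sigma2 (M a Q r θ : ℝ) : ℝ :=
  (r ^ 2 + a ^ 2) ^ 2 - a ^ 2 * Δ M a Q r * Real.sin θ ^ 2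

/-- The Regge–Wheeler coordinate. -/
def rstar (M a Q R0 r : ℝ) : ℝ :=
  r + (1 / (2 * κplus M a Q)) * Real.log (r - rplus M a Q)
    - (1 / (2 * κminus M a Q)) * Real.log (r - rminus M a Q) + R0

/-- The simple-null-geodesic Hamiltonian in Regge–Wheeler variables,
`P*(r_*,θ;ξ,q) = h²√(ξ² + a₀²q²)` with `h² = (r²+a²)/σ`,
`a₀ = √Δ/(r²+a²)`, evaluated at `r = r(r_*)`. -/
def Pstar (M a Q : ℝ) (rinv : ℝ → ℝ) (x θ ξ q : ℝ) : ℝ :=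
  (((rinv x) ^ 2 + a ^ 2) / Real.sqrt (sigma2 M a Q (rinv x) θ)) *
    Real.sqrt (ξ ^ 2
      + (Real.sqrt (Δ M a Q (rinv x)) / ((rinv x) ^ 2 + a ^ 2)) ^ 2 * q ^ 2)


/-!
Conservation of `E = P*` is the general fact that a Hamiltonian is constant along its own flow:
by the chain rule `dE/ds = P*_x P*_ξ + P*_θ P*_q - P*_ξ P*_x - P*_q P*_θ = 0`. This needs `P*` to
be differentiable jointly in its four variables, which holds away from `ξ = q = 0` because
`r(·)` is differentiable by the inverse function theorem (`dr_*/dr = (r²+a²)/Δ > 0`).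

The Carter quantity comes from separation of variables. Since
`σ² = (r²+a²)² (1 - a²a₀² sin²θ)`, the Hamiltonian satisfies
`P*² (1 - a²a₀² sin²θ) = ξ² + a₀²q²`, where `a₀` depends on `r_*` only. Differentiating this
identity in `θ` and in `q` gives `q ∂_θP* = a² P*² sin θ cos θ ∂_qP*`, which is exactly the
vanishing of `d/ds (q² + a²E² sin²θ)` along the flow.
-/

section Geometry

variable {M a Q : ℝ}

lemma rminus_lt_rplus (hsub : a ^ 2 + Q ^ 2 < M ^ 2) : rminus M a Q < rplus M a Q := by
  have := Real.sqrt_pos.2 (sub_pos.2 hsub)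
  unfold rplus rminus; linarith

lemma M_lt_rplus (hsub : a ^ 2 + Q ^ 2 < M ^ 2) : M < rplus M a Q := by
  have := Real.sqrt_pos.2 (sub_pos.2 hsub)
  unfold rplus; linarith

lemma rplus_pos (hM : 0 < M) (hsub : a ^ 2 + Q ^ 2 < M ^ 2) : 0 < rplus M a Q :=
  hM.trans (M_lt_rplus hsub)

lemma sq_add_sq_pos_of_rplus_lt (hM : 0 < M) (hsub : a ^ 2 + Q ^ 2 < M ^ 2) {r : ℝ}
    (hr : rplus M a Q < r) : 0 < r ^ 2 + a ^ 2 := by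
  have := (rplus_pos hM hsub).trans hr
  positivity

lemma Δ_eq_mul (hsub : a ^ 2 + Q ^ 2 ≤ M ^ 2) (r : ℝ) :
    Δ M a Q r = (r - rplus M a Q) * (r - rminus M a Q) := by
  have := Real.sq_sqrt (sub_nonneg.2 hsub)
  unfold Δ rplus rminus; linear_combination this

lemma Δ_pos (hsub : a ^ 2 + Q ^ 2 < M ^ 2) {r : ℝ} (hr : rplus M a Q < r) :
    0 < Δ M a Q r := by
  rw [Δ_eq_mul hsub.le]
  have := rminus_lt_rplus hsub
  exact mul_pos (by linarith) (by linarith)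

lemma sigma2_eq (r θ : ℝ) : sigma2 M a Q r θ =
    (r ^ 2 + a ^ 2) * (r ^ 2 + a ^ 2 * cos θ ^ 2) + a ^ 2 * sin θ ^ 2 * (2 * M * r - Q ^ 2) := by
  have := sin_sq_add_cos_sq θ
  unfold sigma2 Δ; linear_combination (-(a ^ 2 * (r ^ 2 + a ^ 2))) * this

lemma sigma2_pos (hM : 0 < M) (hsub : a ^ 2 + Q ^ 2 < M ^ 2) {r : ℝ} (hr : rplus M a Q < r)
    (θ : ℝ) : 0 < sigma2 M a Q r θ := by
  have hMr : M < r := (M_lt_rplus hsub).trans hr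
  have hQ : 0 ≤ 2 * M * r - Q ^ 2 := by nlinarith
  have : 0 < r := hM.trans hMr
  rw [sigma2_eq]
  positivity

lemma hasDerivAt_rstar (hsub : a ^ 2 + Q ^ 2 < M ^ 2) (R0 : ℝ) {r : ℝ}
    (hr : rplus M a Q < r) :
    HasDerivAt (rstar M a Q R0) ((r ^ 2 + a ^ 2) / Δ M a Q r) r := by
  have hpm := rminus_lt_rplus hsub
  have hlog (c : ℝ) (hc : c < r) : HasDerivAt (fun y => Real.log (y - c)) (1 / (r - c)) r := by
    simpa using ((hasDerivAt_id r).sub_const c).log (sub_pos.2 hc).ne'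
  have h := (((hasDerivAt_id r).add ((hlog _ hr).const_mul (1 / (2 * κplus M a Q)))).sub
    ((hlog _ (hpm.trans hr)).const_mul (1 / (2 * κminus M a Q)))).add_const R0
  refine h.congr_deriv ?_
  have : rplus M a Q - rminus M a Q ≠ 0 := (sub_pos.2 hpm).ne'
  have : r - rplus M a Q ≠ 0 := (sub_pos.2 hr).ne'
  have : r - rminus M a Q ≠ 0 := (sub_pos.2 (hpm.trans hr)).ne'
  rw [Δ_eq_mul hsub.le]
  unfold κplus κminus
  field_simp
  ring

lemma strictMonoOn_rstar (hM : 0 < M) (hsub : a ^ 2 + Q ^ 2 < M ^ 2) (R0 : ℝ) :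
    StrictMonoOn (rstar M a Q R0) (Ioi (rplus M a Q)) := by
  refine strictMonoOn_of_hasDerivWithinAt_pos (convex_Ioi _)
    (fun r hr => (hasDerivAt_rstar hsub R0 hr).continuousAt.continuousWithinAt)
    (fun r hr => ?_) (fun r hr => ?_) (f' := fun r => (r ^ 2 + a ^ 2) / Δ M a Q r)
  all_goals rw [interior_Ioi] at hr
  · exact (hasDerivAt_rstar hsub R0 hr).hasDerivWithinAt
  · exact div_pos (sq_add_sq_pos_of_rplus_lt hM hsub hr) (Δ_pos hsub hr)

end Geometry

section Inverse

variable {M a Q R0 : ℝ} (hM : 0 < M) (hsub : a ^ 2 + Q ^ 2 < M ^ 2) {rinv : ℝ → ℝ}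
  (hrinv : ∀ x, rplus M a Q < rinv x ∧ rstar M a Q R0 (rinv x) = x)
include hM hsub hrinv

lemma rinv_rstar {r : ℝ} (hr : rplus M a Q < r) : rinv (rstar M a Q R0 r) = r :=
  (strictMonoOn_rstar hM hsub R0).injOn (hrinv _).1 hr (hrinv _).2

lemma monotone_rinv : Monotone rinv := fun x y hxy => by
  rwa [← (strictMonoOn_rstar hM hsub R0).le_iff_le (hrinv x).1 (hrinv y).1, (hrinv x).2,
    (hrinv y).2]

lemma continuousAt_rinv (x : ℝ) : ContinuousAt rinv x := by
  refine continuousAt_of_monotoneOn_of_image_mem_nhds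
    ((monotone_rinv hM hsub hrinv).monotoneOn univ) Filter.univ_mem
    (Filter.mem_of_superset (Ioi_mem_nhds (hrinv x).1) fun r hr => ?_)
  exact ⟨rstar M a Q R0 r, mem_univ _, rinv_rstar hM hsub hrinv hr⟩

lemma hasDerivAt_rinv (x : ℝ) :
    HasDerivAt rinv (Δ M a Q (rinv x) / (rinv x ^ 2 + a ^ 2)) x := by
  have h := HasDerivAt.of_local_left_inverse (continuousAt_rinv hM hsub hrinv x)
    (hasDerivAt_rstar hsub R0 (hrinv x).1)
    (div_pos (sq_add_sq_pos_of_rplus_lt hM hsub (hrinv x).1) (Δ_pos hsub (hrinv x).1)).ne'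
    (Filter.Eventually.of_forall fun y => (hrinv y).2)
  rwa [inv_div] at h

end Inverse

section Hamiltonian

variable {H : ℝ → ℝ → ℝ → ℝ → ℝ}

lemma fderiv_apply_eq_partial_derivs {x θ ξ q : ℝ}
    (hH : DifferentiableAt ℝ (fun p : ℝ × ℝ × ℝ × ℝ => H p.1 p.2.1 p.2.2.1 p.2.2.2)
      (x, θ, ξ, q)) (v : ℝ × ℝ × ℝ × ℝ) :
    fderiv ℝ (fun p : ℝ × ℝ × ℝ × ℝ => H p.1 p.2.1 p.2.2.1 p.2.2.2) (x, θ, ξ, q) v =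
      deriv (fun u => H u θ ξ q) x * v.1 + deriv (fun u => H x u ξ q) θ * v.2.1
        + deriv (fun u => H x θ u q) ξ * v.2.2.1 + deriv (fun u => H x θ ξ u) q * v.2.2.2 := by
  set L := fderiv ℝ (fun p : ℝ × ℝ × ℝ × ℝ => H p.1 p.2.1 p.2.2.1 p.2.2.2) (x, θ, ξ, q)
  have partial_eq {γ : ℝ → ℝ × ℝ × ℝ × ℝ} {t : ℝ} {e : ℝ × ℝ × ℝ × ℝ} (hγ : HasDerivAt γ e t)
      (ht : γ t = (x, θ, ξ, q)) :
      deriv (fun u => H (γ u).1 (γ u).2.1 (γ u).2.2.1 (γ u).2.2.2) t = L e := by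
    rw [← ht] at hH
    exact (hH.hasFDerivAt.comp_hasDerivAt t hγ).deriv.trans (by rw [ht])
  have c (t y : ℝ) : HasDerivAt (fun _ => y) 0 t := hasDerivAt_const t y
  have i (t : ℝ) : HasDerivAt (fun u => u) 1 t := hasDerivAt_id t
  have hx : deriv (fun u => H u θ ξ q) x = L (1, 0, 0, 0) :=
    partial_eq ((i x).prodMk ((c x θ).prodMk ((c x ξ).prodMk (c x q)))) rfl
  have hθ : deriv (fun u => H x u ξ q) θ = L (0, 1, 0, 0) :=
    partial_eq ((c θ x).prodMk ((i θ).prodMk ((c θ ξ).prodMk (c θ q)))) rfl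
  have hξ : deriv (fun u => H x θ u q) ξ = L (0, 0, 1, 0) :=
    partial_eq ((c ξ x).prodMk ((c ξ θ).prodMk ((i ξ).prodMk (c ξ q)))) rfl
  have hq : deriv (fun u => H x θ ξ u) q = L (0, 0, 0, 1) :=
    partial_eq ((c q x).prodMk ((c q θ).prodMk ((c q ξ).prodMk (i q)))) rfl
  rw [hx, hθ, hξ, hq]
  obtain ⟨v₁, v₂, v₃, v₄⟩ := v
  have hv : ((v₁, v₂, v₃, v₄) : ℝ × ℝ × ℝ × ℝ) = v₁ • (1, 0, 0, 0) + v₂ • (0, 1, 0, 0)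
      + v₃ • (0, 0, 1, 0) + v₄ • (0, 0, 0, 1) := by simp
  conv_lhs => rw [hv]
  simp only [map_add, map_smul, smul_eq_mul]
  ring

lemma mul_deriv_eq_of_sq_mul_eq {P : ℝ → ℝ → ℝ} {c g ξ θ q : ℝ}
    (hsep : ∀ θ q, P θ q ^ 2 * (1 - c * g * sin θ ^ 2) = ξ ^ 2 + g * q ^ 2)
    (hpos : 0 < ξ ^ 2 + g * q ^ 2)
    (hθ : DifferentiableAt ℝ (fun u => P u q) θ) (hq : DifferentiableAt ℝ (fun u => P θ u) q) :
    q * deriv (fun u => P u q) θ = c * P θ q ^ 2 * sin θ * cos θ * deriv (fun u => P θ u) q := by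
  set A := 1 - c * g * sin θ ^ 2
  have dθ : HasDerivAt (fun u => P u q ^ 2 * (1 - c * g * sin u ^ 2))
      (2 * P θ q * deriv (fun u => P u q) θ * A
        - P θ q ^ 2 * (c * g * (2 * sin θ * cos θ))) θ := by
    refine ((hθ.hasDerivAt.pow 2).mul
      ((((hasDerivAt_sin θ).pow 2).const_mul (c * g)).const_sub 1)).congr_deriv ?_
    simp only [A, Pi.pow_apply]
    ring
  have dq : HasDerivAt (fun u => P θ u ^ 2 * A) (2 * P θ q * deriv (fun u => P θ u) q * A) q := by
    refine ((hq.hasDerivAt.pow 2).mul_const A).congr_deriv ?_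
    ring
  rw [show (fun u => P u q ^ 2 * (1 - c * g * sin u ^ 2)) = fun _ => ξ ^ 2 + g * q ^ 2 from
    funext fun u => hsep u q] at dθ
  rw [show (fun u => P θ u ^ 2 * A) = fun u => ξ ^ 2 + g * u ^ 2 from
    funext fun u => hsep θ u] at dq
  have eθ := dθ.unique (hasDerivAt_const θ _)
  have eq := dq.unique (((hasDerivAt_pow 2 q).const_mul g).const_add (ξ ^ 2))
  have hPA : 2 * P θ q * A ≠ 0 := by
    obtain ⟨hP, hA⟩ := mul_ne_zero_iff.1 ((hsep θ q).symm ▸ hpos.ne' : P θ q ^ 2 * A ≠ 0)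
    exact mul_ne_zero (mul_ne_zero two_ne_zero (pow_ne_zero_iff two_ne_zero |>.1 hP)) hA
  apply mul_left_cancel₀ hPA
  norm_num at eq
  linear_combination q * eθ - c * P θ q ^ 2 * sin θ * cos θ * eq

structure IsHamiltonianFlow (H : ℝ → ℝ → ℝ → ℝ → ℝ) (x θ ξ q : ℝ → ℝ) : Prop where
  hasDerivAt_x : ∀ s, HasDerivAt x (deriv (fun u => H (x s) (θ s) u (q s)) (ξ s)) s
  hasDerivAt_θ : ∀ s, HasDerivAt θ (deriv (fun u => H (x s) (θ s) (ξ s) u) (q s)) s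
  hasDerivAt_ξ : ∀ s, HasDerivAt ξ (-deriv (fun u => H u (θ s) (ξ s) (q s)) (x s)) s
  hasDerivAt_q : ∀ s, HasDerivAt q (-deriv (fun u => H (x s) u (ξ s) (q s)) (θ s)) s

namespace IsHamiltonianFlow

variable {x θ ξ q : ℝ → ℝ} (hf : IsHamiltonianFlow H x θ ξ q)
  (hH : ∀ s, DifferentiableAt ℝ (fun p : ℝ × ℝ × ℝ × ℝ => H p.1 p.2.1 p.2.2.1 p.2.2.2)
    (x s, θ s, ξ s, q s))
include hf hH

lemma hasDerivAt_hamiltonian (s : ℝ) :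
    HasDerivAt (fun t => H (x t) (θ t) (ξ t) (q t)) 0 s := by
  have h := (hH s).hasFDerivAt.comp_hasDerivAt s ((hf.hasDerivAt_x s).prodMk
    ((hf.hasDerivAt_θ s).prodMk ((hf.hasDerivAt_ξ s).prodMk (hf.hasDerivAt_q s))))
  rw [fderiv_apply_eq_partial_derivs (hH s)] at h
  exact h.congr_deriv (by ring)

lemma hamiltonian_eq (s s' : ℝ) :
    H (x s) (θ s) (ξ s) (q s) = H (x s') (θ s') (ξ s') (q s') :=
  is_const_of_deriv_eq_zero (fun t => (hf.hasDerivAt_hamiltonian hH t).differentiableAt)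
    (fun t => (hf.hasDerivAt_hamiltonian hH t).deriv) s s'

lemma carter_eq {c : ℝ} {g : ℝ → ℝ}
    (hsep : ∀ x θ ξ q, H x θ ξ q ^ 2 * (1 - c * g x * sin θ ^ 2) = ξ ^ 2 + g x * q ^ 2)
    (hpos : ∀ s, 0 < ξ s ^ 2 + g (x s) * q s ^ 2) (s s' : ℝ) :
    q s ^ 2 + c * H (x s) (θ s) (ξ s) (q s) ^ 2 * sin (θ s) ^ 2
      = q s' ^ 2 + c * H (x s') (θ s') (ξ s') (q s') ^ 2 * sin (θ s') ^ 2 := by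
  have hK (t : ℝ) : HasDerivAt
      (fun t => q t ^ 2 + c * H (x t) (θ t) (ξ t) (q t) ^ 2 * sin (θ t) ^ 2) 0 t := by
    have hθ : DifferentiableAt ℝ (fun u => H (x t) u (ξ t) (q t)) (θ t) :=
      (hH t).comp (θ t) (f := fun u => (x t, u, ξ t, q t)) (by fun_prop)
    have hq : DifferentiableAt ℝ (fun u => H (x t) (θ t) (ξ t) u) (q t) :=
      (hH t).comp (q t) (f := fun u => (x t, θ t, ξ t, u)) (by fun_prop)
    have key := mul_deriv_eq_of_sq_mul_eq (fun θ q => hsep (x t) θ (ξ t) q) (hpos t) hθ hq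
    refine (((hf.hasDerivAt_q t).pow 2).add ((((hf.hasDerivAt_hamiltonian hH t).pow 2).const_mul
      c).mul ((hf.hasDerivAt_θ t).sin.pow 2))).congr_deriv ?_
    simp only [Pi.pow_apply]
    linear_combination (-2) * key
  exact is_const_of_deriv_eq_zero (fun t => (hK t).differentiableAt) (fun t => (hK t).deriv) s s'

end IsHamiltonianFlow

end Hamiltonian

section Pstar

variable {M a Q R0 : ℝ}

def a0 (M a Q r : ℝ) : ℝ := Real.sqrt (Δ M a Q r) / (r ^ 2 + a ^ 2)

lemma Pstar_eq (rinv : ℝ → ℝ) (x θ ξ q : ℝ) : Pstar M a Q rinv x θ ξ q =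
    (rinv x ^ 2 + a ^ 2) / Real.sqrt (sigma2 M a Q (rinv x) θ)
      * Real.sqrt (ξ ^ 2 + a0 M a Q (rinv x) ^ 2 * q ^ 2) :=
  rfl

lemma sq_add_mul_sq_pos {ξ q b : ℝ} (hb : 0 < b) (hξq : ¬(ξ = 0 ∧ q = 0)) :
    0 < ξ ^ 2 + b * q ^ 2 := by
  rcases not_and_or.1 hξq with hξ | hq <;> positivity

lemma a0_pos (hM : 0 < M) (hsub : a ^ 2 + Q ^ 2 < M ^ 2) {r : ℝ} (hr : rplus M a Q < r) :
    0 < a0 M a Q r :=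
  div_pos (Real.sqrt_pos.2 (Δ_pos hsub hr)) (sq_add_sq_pos_of_rplus_lt hM hsub hr)

lemma Pstar_sq_mul (hM : 0 < M) (hsub : a ^ 2 + Q ^ 2 < M ^ 2) {rinv : ℝ → ℝ} {x : ℝ}
    (hr : rplus M a Q < rinv x) (θ ξ q : ℝ) :
    Pstar M a Q rinv x θ ξ q ^ 2 * (1 - a ^ 2 * a0 M a Q (rinv x) ^ 2 * sin θ ^ 2)
      = ξ ^ 2 + a0 M a Q (rinv x) ^ 2 * q ^ 2 := by
  have hT := (sq_add_sq_pos_of_rplus_lt hM hsub hr).ne'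
  have hσ := sigma2_pos hM hsub hr θ
  have ha0 : a0 M a Q (rinv x) ^ 2 = Δ M a Q (rinv x) / (rinv x ^ 2 + a ^ 2) ^ 2 := by
    rw [a0, div_pow, Real.sq_sqrt (Δ_pos hsub hr).le]
  rw [Pstar_eq, mul_pow, div_pow, Real.sq_sqrt hσ.le, Real.sq_sqrt (by positivity), ha0]
  unfold sigma2 at hσ ⊢
  field_simp

lemma differentiableAt_Pstar (hM : 0 < M) (hsub : a ^ 2 + Q ^ 2 < M ^ 2) {rinv : ℝ → ℝ}
    (hrinv : ∀ x, rplus M a Q < rinv x ∧ rstar M a Q R0 (rinv x) = x) (x θ : ℝ) {ξ q : ℝ}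
    (hξq : ¬(ξ = 0 ∧ q = 0)) :
    DifferentiableAt ℝ (fun p : ℝ × ℝ × ℝ × ℝ => Pstar M a Q rinv p.1 p.2.1 p.2.2.1 p.2.2.2)
      (x, θ, ξ, q) := by
  have hr := (hrinv x).1
  have hrinv_diff (y : ℝ) : DifferentiableAt ℝ rinv y :=
    (hasDerivAt_rinv hM hsub hrinv y).differentiableAt
  have hT := (sq_add_sq_pos_of_rplus_lt hM hsub hr).ne'
  have hΔ := (Δ_pos hsub hr).ne'
  have hσ := (sigma2_pos hM hsub hr θ).ne'
  have hσ' := (Real.sqrt_pos.2 (sigma2_pos hM hsub hr θ)).ne'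
  have hW := (sq_add_mul_sq_pos (pow_pos (a0_pos hM hsub hr) 2) hξq).ne'
  unfold Pstar
  unfold a0 at hW
  unfold sigma2 Δ at hΔ hσ hσ' ⊢
  fun_prop (disch := assumption)

end Pstar

theorem pstar_constants_of_motion_general (M a Q R0 : ℝ) (hM : 0 < M)
    (hsub : a ^ 2 + Q ^ 2 < M ^ 2)
    -- the inverse of the Regge–Wheeler coordinate
    (rinv : ℝ → ℝ)
    (hrinv : ∀ x : ℝ, rplus M a Q < rinv x ∧ rstar M a Q R0 (rinv x) = x)
    -- a C¹ solution of Hamilton's equations for P*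
    (x θc ξ q : ℝ → ℝ)
    (hnz : ∀ s, ¬(ξ s = 0 ∧ q s = 0))
    (eqx : ∀ s, HasDerivAt x
      (deriv (fun u => Pstar M a Q rinv (x s) (θc s) u (q s)) (ξ s)) s)
    (eqθ : ∀ s, HasDerivAt θc
      (deriv (fun u => Pstar M a Q rinv (x s) (θc s) (ξ s) u) (q s)) s)
    (eqξ : ∀ s, HasDerivAt ξ
      (-deriv (fun u => Pstar M a Q rinv u (θc s) (ξ s) (q s)) (x s)) s)
    (eqq : ∀ s, HasDerivAt q
      (-deriv (fun u => Pstar M a Q rinv (x s) u (ξ s) (q s)) (θc s)) s) :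
    (∀ s s' : ℝ,
      Pstar M a Q rinv (x s) (θc s) (ξ s) (q s)
        = Pstar M a Q rinv (x s') (θc s') (ξ s') (q s')) ∧
    (∀ s s' : ℝ,
      (q s) ^ 2 + a ^ 2 * (Pstar M a Q rinv (x s) (θc s) (ξ s) (q s)) ^ 2
          * Real.sin (θc s) ^ 2
        = (q s') ^ 2 + a ^ 2 * (Pstar M a Q rinv (x s') (θc s') (ξ s') (q s')) ^ 2
            * Real.sin (θc s') ^ 2) := by
  have hf : IsHamiltonianFlow (Pstar M a Q rinv) x θc ξ q := ⟨eqx, eqθ, eqξ, eqq⟩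
  have hH (s : ℝ) := differentiableAt_Pstar hM hsub hrinv (x s) (θc s) (hnz s)
  refine ⟨hf.hamiltonian_eq hH, hf.carter_eq hH (g := fun x => a0 M a Q (rinv x) ^ 2)
    (fun x θ ξ q => Pstar_sq_mul hM hsub (hrinv x).1 θ ξ q) fun s => ?_⟩
  exact sq_add_mul_sq_pos (pow_pos (a0_pos hM hsub (hrinv (x s)).1) 2) (hnz s)

theorem pstar_constants_of_motion (M a Q R0 : ℝ) (hM : 0 < M) (ha : 0 < a)
    (hsub : a ^ 2 + Q ^ 2 < M ^ 2)
    -- the inverse of the Regge–Wheeler coordinate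
    (rinv : ℝ → ℝ)
    (hrinv : ∀ x : ℝ, rplus M a Q < rinv x ∧ rstar M a Q R0 (rinv x) = x)
    (hrinv' : ∀ r : ℝ, rplus M a Q < r → rinv (rstar M a Q R0 r) = r)
    -- a C¹ solution of Hamilton's equations for P*
    (x θc ξ q : ℝ → ℝ)
    (hθ : ∀ s, θc s ∈ Set.Ioo 0 Real.pi)
    (hnz : ∀ s, ¬(ξ s = 0 ∧ q s = 0))
    (eqx : ∀ s, HasDerivAt x
      (deriv (fun u => Pstar M a Q rinv (x s) (θc s) u (q s)) (ξ s)) s)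
    (eqθ : ∀ s, HasDerivAt θc
      (deriv (fun u => Pstar M a Q rinv (x s) (θc s) (ξ s) u) (q s)) s)
    (eqξ : ∀ s, HasDerivAt ξ
      (-deriv (fun u => Pstar M a Q rinv u (θc s) (ξ s) (q s)) (x s)) s)
    (eqq : ∀ s, HasDerivAt q
      (-deriv (fun u => Pstar M a Q rinv (x s) u (ξ s) (q s)) (θc s)) s) :
    (∀ s s' : ℝ,
      Pstar M a Q rinv (x s) (θc s) (ξ s) (q s)
        = Pstar M a Q rinv (x s') (θc s') (ξ s') (q s')) ∧
    (∀ s s' : ℝ,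
      (q s) ^ 2 + a ^ 2 * (Pstar M a Q rinv (x s) (θc s) (ξ s) (q s)) ^ 2
          * Real.sin (θc s) ^ 2
        = (q s') ^ 2 + a ^ 2 * (Pstar M a Q rinv (x s') (θc s') (ξ s') (q s')) ^ 2
            * Real.sin (θc s') ^ 2) :=
  pstar_constants_of_motion_general M a Q R0 hM hsub rinv hrinv x θc ξ q hnz eqx eqθ eqξ eqq

end Stmt13
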